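/- In the C*-algebra O_{λ(Λ)} of the λ-synchronizing λ-graph system of a λ-synchronizing subshift Λ, for words ξ, η ∈ B_*(Λ): Γ_*^+(ξ) = Γ_*^+(η) if and only if S_ξ* S_ξ = S_η* S_η. -/

import Mathlib

open scoped Classical

/-- The language of a subshift over alphabet `A`: nonempty, factorial
(closed under subwords) and extendable on both sides. -/
structure ShiftLang (A : Type*) where
  L : Set (List A)
  nil_mem : [] ∈ L
  factor : ∀ u v w : List A, u ++ v ++ w ∈ L → v ∈ L
  ext_left : ∀ w ∈ L, ∃ a : A, (a :: w) ∈ L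
  ext_right : ∀ w ∈ L, ∃ a : A, (w ++ [a]) ∈ L

namespace ShiftLang

variable {A : Type*} (Λ : ShiftLang A)

/-- Admissible words of length `l`. -/
def B (l : ℕ) : Set (List A) := {w | w ∈ Λ.L ∧ w.length = l}

/-- `Γ_l^-(μ)`: admissible words `ν` of length `l` with `νμ` admissible. -/
def Γminus (l : ℕ) (μ : List A) : Set (List A) := {ν | ν ∈ Λ.B l ∧ ν ++ μ ∈ Λ.L}

/-- `Γ_*^+(μ)`: followers of `μ`. -/
def Γplus (μ : List A) : Set (List A) := {ω | μ ++ ω ∈ Λ.L}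

/-- `S_l(Λ)`: the set of `l`-synchronizing words. -/
def Sync (l : ℕ) : Set (List A) :=
  {μ | μ ∈ Λ.L ∧ ∀ ω ∈ Λ.Γplus μ, Λ.Γminus l μ = Λ.Γminus l (μ ++ ω)}

/-- Irreducibility of a subshift in terms of its language. -/
def Irreducible : Prop := ∀ μ ∈ Λ.L, ∀ ν ∈ Λ.L, ∃ η, μ ++ η ++ ν ∈ Λ.L

/-- `λ`-synchronization of a subshift. -/
def IsLambdaSync : Prop :=
  ∀ l : ℕ, ∀ η ∈ Λ.B l, ∀ k : ℕ, l ≤ k → ∃ ν ∈ Λ.Sync k, η ++ ν ∈ Λ.Sync (k - l)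

/-- `μ ≻ ν` : there is `η` with `Γ_*^+(ν) = Γ_*^+(μην)`. -/
def Succ (μ ν : List A) : Prop := ∃ η, Λ.Γplus ν = Λ.Γplus (μ ++ η ++ ν)

/-- Synchronizing transitivity. -/
def SyncTransitive : Prop := ∀ μ ∈ Λ.L, ∀ ν ∈ Λ.L, Λ.Succ μ ν ∧ Λ.Succ ν μ

/-- The right one-sided shift space `X_Λ`. -/
def X : Set (ℕ → A) := {x | ∀ n : ℕ, (List.ofFn fun i : Fin n => x i) ∈ Λ.L}

end ShiftLang

/-- A (left-resolving–free) `λ`-graph system: a labeled Bratteli diagram with `ι`-maps. -/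
structure LGS (A : Type*) where
  V : ℕ → Type
  edge : ∀ l : ℕ, V l → A → V (l + 1) → Prop
  ι : ∀ l : ℕ, V (l + 1) → V l
  ι_surj : ∀ l, Function.Surjective (ι l)
  exists_succ : ∀ l (v : V l), ∃ a u, edge l v a u
  exists_pred : ∀ l (u : V (l + 1)), ∃ a v, edge l v a u
  local_prop : ∀ l (u : V l) (v : V (l + 2)) (a : A),
    (∃ w, edge (l + 1) w a v ∧ ι l w = u) ↔ edge l u a (ι (l + 1) v)

namespace LGS

variable {A : Type*} (G : LGS A)

/-- Labeled paths in a `λ`-graph system. -/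
inductive Path : ∀ {l m : ℕ}, G.V l → List A → G.V m → Prop
  | nil {l : ℕ} (v : G.V l) : Path v [] v
  | cons {l m : ℕ} {v : G.V l} {a : A} {u : G.V (l + 1)} {w : List A} {x : G.V m} :
      G.edge l v a u → Path u w x → Path v (a :: w) x

/-- The word `w` leaves the vertex `v`. -/
def Leaves {l : ℕ} (v : G.V l) (w : List A) : Prop := ∃ m, ∃ u : G.V m, G.Path v w u

/-- The vertex `v` launches the word `w`: `w` leaves `v` and no other vertex of `V_l`. -/
def Launches {l : ℕ} (v : G.V l) (w : List A) : Prop :=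
  G.Leaves v w ∧ ∀ v' : G.V l, G.Leaves v' w → v' = v

/-- Left-resolving: edges with the same label have distinct terminal vertices. -/
def LeftResolving : Prop :=
  ∀ (l : ℕ) (v v' : G.V l) (a : A) (u : G.V (l + 1)), G.edge l v a u → G.edge l v' a u → v = v'

/-- The predecessor set `Γ_l^-(v)` of a vertex: words of length `l` labeling paths from `V_0` to `v`. -/
def ΓminusV {l : ℕ} (v : G.V l) : Set (List A) :=
  {w | w.length = l ∧ ∃ v0 : G.V 0, G.Path v0 w v}

/-- Predecessor-separated: distinct vertices of `V_l` have distinct predecessor sets. -/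
def PredecessorSeparated : Prop := ∀ (l : ℕ) (u v : G.V l), G.ΓminusV u = G.ΓminusV v → u = v

/-- A `λ`-synchronizing `λ`-graph system: every vertex launches some word. -/
def LambdaSynchronizing : Prop := ∀ (l : ℕ) (v : G.V l), ∃ w : List A, G.Launches v w

/-- `G` presents the subshift `Λ`: the language of `Λ` is the set of words labeling paths of `G`. -/
def Presents (Λ : ShiftLang A) : Prop :=
  ∀ w : List A, w ∈ Λ.L ↔ ∃ (l : ℕ) (v : G.V l), G.Leaves v w

/-- Iterated `ι`-map `ι^n : V_{l+n} → V_l`. -/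
def iotaPow : ∀ (n : ℕ) {l : ℕ}, G.V (l + n) → G.V l
  | 0, _, v => v
  | n + 1, l, v => iotaPow n (G.ι (l + n) v)

/-- `ι`-irreducibility of a `λ`-graph system. -/
def IotaIrreducible : Prop :=
  ∀ (l : ℕ) (v u : G.V l) (γ : List A) (t : G.V (l + γ.length)), G.Path u γ t →
    ∃ (n : ℕ) (u' : G.V (l + n)) (w : List A) (t' : G.V (l + n + γ.length)),
      G.iotaPow n u' = u ∧ G.Path v w u' ∧ G.Path u' γ t' ∧
      G.iotaPow n (cast (congrArg G.V (Nat.add_right_comm l n γ.length)) t') = t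

/-- `λ`-irreducibility of a `λ`-graph system. -/
def LambdaIrreducible : Prop :=
  ∀ (l : ℕ) (u v : G.V l), ∃ L : ℕ, ∀ w : G.V (l + L),
    G.iotaPow L w = u → ∃ γ : List A, G.Path v γ w

/-- `Γ_∞^+(v)`: infinite label sequences of infinite paths starting at `v`. -/
def GammaInf {l : ℕ} (v : G.V l) : Set (ℕ → A) :=
  {x | ∃ vs : ∀ n : ℕ, G.V (l + n), vs 0 = v ∧ ∀ n, G.edge (l + n) (vs n) (x n) (vs (n + 1))}

/-- Condition (I): every vertex has at least two distinct infinite follower label sequences. -/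
def ConditionI : Prop := ∀ (l : ℕ) (v : G.V l), ∃ x ∈ G.GammaInf v, ∃ y ∈ G.GammaInf v, x ≠ y

/-- `G` is (isomorphic to) the `λ`-synchronizing `λ`-graph system `𝔏^{λ(Λ)}` of `Λ`:
vertices of `V_l` correspond to `l`-past equivalence classes of `l`-synchronizing words
(identified via their predecessor sets), and edges are as in the canonical construction. -/
def IsLambdaSyncSystem (Λ : ShiftLang A) : Prop :=
  (∀ (l : ℕ) (v : G.V l), ∃ μ ∈ Λ.Sync l, G.ΓminusV v = Λ.Γminus l μ) ∧
  (∀ l : ℕ, ∀ μ ∈ Λ.Sync l, ∃ v : G.V l, G.ΓminusV v = Λ.Γminus l μ) ∧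
  (∀ (l : ℕ) (v : G.V l) (a : A) (u : G.V (l + 1)),
    G.edge l v a u ↔ ∃ ν ∈ Λ.Sync (l + 1), (a :: ν) ∈ Λ.L ∧
      G.ΓminusV u = Λ.Γminus (l + 1) ν ∧ G.ΓminusV v = Λ.Γminus l (a :: ν))

end LGS

/-- The partial isometry `S_w = S_{w_1} ⋯ S_{w_k}` associated with a word. -/
def sword {A R : Type*} [Monoid R] (S : A → R) (w : List A) : R := (w.map S).prod

/-
Under the relations, `S_a* E_v S_a` is the sum of the projections `E_u` over the `a`-edges
`v → u`, and the graph is forced to be left-resolving: two `a`-edges into `u` would give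
`E_u S_a* S_a E_u = N • E_u` with `N ≥ 2`, while `S_a S_a* ≤ 1` yields `(S_a* S_a)² ≤ S_a* S_a`,
hence `N² • E_u ≤ N • E_u` and `E_u = 0`. So `S_ξ* S_ξ` is the sum of the `E_u`, `u` running over
the ends of the paths labelled `ξ` into level `|ξ| + |η|`, and such sums determine their index
sets because `E_u E_v E_u = 0` for `u ≠ v`. In the λ-synchronizing λ-graph system a vertex `u`
of level `m`, represented by an `m`-synchronizing word `μ`, ends a path labelled `ξ` iff `ξμ` is
admissible; λ-synchronization extends any follower `ω` of `ξ` to a synchronizing word `ων`, so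
equal end sets give equal follower sets.
-/

namespace ShiftLang

variable {A : Type*} (Λ : ShiftLang A)

lemma mem_of_append_mem_left {u v : List A} (h : u ++ v ∈ Λ.L) : u ∈ Λ.L :=
  Λ.factor [] u v h

lemma mem_of_append_mem_right {u v : List A} (h : u ++ v ∈ Λ.L) : v ∈ Λ.L :=
  Λ.factor u v [] (by simpa using h)

lemma exists_length_eq_append_mem (j : ℕ) {w : List A} (hw : w ∈ Λ.L) :
    ∃ τ : List A, τ.length = j ∧ τ ++ w ∈ Λ.L := by
  induction j with
  | zero => exact ⟨[], rfl, hw⟩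
  | succ n ih =>
    obtain ⟨τ, hlen, hmem⟩ := ih
    obtain ⟨a, ha⟩ := Λ.ext_left _ hmem
    exact ⟨a :: τ, by simp [hlen], by simpa using ha⟩

lemma mem_Γminus_append_iff {ρ σ : List A} {l j : ℕ} (hj : l + ρ.length = j) (τ : List A) :
    τ ∈ Λ.Γminus l (ρ ++ σ) ↔ τ.length = l ∧ τ ++ ρ ∈ Λ.Γminus j σ := by
  constructor
  · rintro ⟨⟨-, hτlen⟩, hmem⟩
    have hmem' : (τ ++ ρ) ++ σ ∈ Λ.L := by simpa using hmem
    exact ⟨hτlen, ⟨Λ.mem_of_append_mem_left hmem', by simp [hτlen, hj]⟩, hmem'⟩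
  · rintro ⟨hlen, ⟨hL, -⟩, hmem⟩
    exact ⟨⟨Λ.mem_of_append_mem_left hL, hlen⟩, by simpa using hmem⟩

lemma Γminus_cons_eq_of_Γminus_eq {ν σ : List A} {j : ℕ}
    (h : Λ.Γminus (j + 1) ν = Λ.Γminus (j + 1) σ) (a : A) :
    Λ.Γminus j (a :: ν) = Λ.Γminus j (a :: σ) := by
  ext τ
  rw [← List.singleton_append, ← List.singleton_append (l := σ),
    Λ.mem_Γminus_append_iff (j := j + 1) rfl, Λ.mem_Γminus_append_iff (j := j + 1) rfl, h]

lemma cons_mem_of_Γminus_eq {ν σ : List A} {j : ℕ}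
    (h : Λ.Γminus (j + 1) ν = Λ.Γminus (j + 1) σ) {a : A} (ha : a :: ν ∈ Λ.L) :
    a :: σ ∈ Λ.L := by
  obtain ⟨τ, hlen, hmem⟩ := Λ.exists_length_eq_append_mem j ha
  have hτa : τ ++ [a] ∈ Λ.Γminus (j + 1) ν := by
    have hτaν : (τ ++ [a]) ++ ν ∈ Λ.L := by simpa using hmem
    exact ⟨⟨Λ.mem_of_append_mem_left hτaν, by simp [hlen]⟩, hτaν⟩
  rw [h] at hτa
  exact Λ.mem_of_append_mem_right (u := τ) (by simpa using hτa.2)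

lemma append_mem_Sync {μ : List A} {j : ℕ} (hμ : μ ∈ Λ.Sync j) (ρ : List A) {l : ℕ}
    (hl : l + ρ.length = j) (hρμ : ρ ++ μ ∈ Λ.L) : ρ ++ μ ∈ Λ.Sync l := by
  refine ⟨hρμ, fun ω hω => ?_⟩
  have hρμω : (ρ ++ μ) ++ ω ∈ Λ.L := hω
  have hμω : μ ++ ω ∈ Λ.L := Λ.mem_of_append_mem_right (u := ρ) (by simpa using hρμω)
  ext τ
  rw [Λ.mem_Γminus_append_iff hl, List.append_assoc, Λ.mem_Γminus_append_iff hl,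
    ← hμ.2 ω hμω]

variable {Λ} in
lemma IsLambdaSync.exists_append_mem_Sync (hΛ : Λ.IsLambdaSync) {ξ ω : List A}
    (h : ξ ++ ω ∈ Λ.L) (k : ℕ) :
    ∃ ν, ω ++ ν ∈ Λ.Sync (ξ.length + k) ∧ ξ ++ (ω ++ ν) ∈ Λ.L := by
  obtain ⟨ν, hν, hξων⟩ := hΛ _ (ξ ++ ω) ⟨h, rfl⟩ ((ξ ++ ω).length + k) (Nat.le_add_right _ _)
  have hξων' : ξ ++ (ω ++ ν) ∈ Λ.L := by simpa using hξων.1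
  exact ⟨ν, Λ.append_mem_Sync hν ω (by simp; omega) (Λ.mem_of_append_mem_right hξων'), hξων'⟩

end ShiftLang

structure IsProjectionPartition {ι R : Type*} [Fintype ι] [Ring R] [Star R] (E : ι → R) :
    Prop where
  isStarProjection : ∀ i, IsStarProjection (E i)
  sum_eq_one : ∑ i, E i = 1

section StarProjection

variable {R : Type*} [Ring R] [StarRing R] [PartialOrder R] [StarOrderedRing R]

lemma IsStarProjection.conjugate_le_conjugate {e a b : R} (he : IsStarProjection e)
    (hab : a ≤ b) : e * a * e ≤ e * b * e := by
  simpa only [he.isSelfAdjoint.star_eq] using star_left_conjugate_le_conjugate hab e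

lemma IsStarProjection.mul_self_le_conjugate_mul_self {e p : R} (he : IsStarProjection e)
    (hp : IsSelfAdjoint p) : (e * p * e) * (e * p * e) ≤ e * (p * p) * e := by
  have hf := he.one_sub
  have hsplit : e * (p * p) * e
      = (e * p * e) * (e * p * e) + star ((1 - e) * p * e) * ((1 - e) * p * e) := by
    have hone : e * e + (1 - e) * (1 - e) = 1 := by
      rw [he.isIdempotentElem.eq, hf.isIdempotentElem.eq, add_sub_cancel]
    rw [star_mul, star_mul, he.isSelfAdjoint.star_eq, hf.isSelfAdjoint.star_eq, hp.star_eq]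
    calc e * (p * p) * e = e * p * (e * e + (1 - e) * (1 - e)) * p * e := by
          rw [hone, mul_one, mul_assoc e p p]
      _ = _ := by noncomm_ring
  rw [hsplit]
  exact le_add_of_nonneg_right (star_mul_self_nonneg _)

variable {ι : Type*} [Fintype ι] {E : ι → R}

lemma IsProjectionPartition.mul_mul_eq_zero (hE : IsProjectionPartition E) {i j : ι}
    (hij : i ≠ j) : E i * E j * E i = 0 := by
  have hEi := hE.isStarProjection i
  refine le_antisymm ?_ ?_
  · have hle : E j ≤ 1 - E i := by
      rw [← hE.sum_eq_one, ← Finset.add_sum_erase _ _ (Finset.mem_univ i), add_sub_cancel_left]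
      exact Finset.single_le_sum (fun k _ => (hE.isStarProjection k).nonneg)
        (Finset.mem_erase.mpr ⟨hij.symm, Finset.mem_univ j⟩)
    calc E i * E j * E i ≤ E i * (1 - E i) * E i := hEi.conjugate_le_conjugate hle
      _ = 0 := by rw [hEi.mul_one_sub_self, zero_mul]
  · simpa only [hEi.isSelfAdjoint.star_eq] using
      star_left_conjugate_nonneg (hE.isStarProjection j).nonneg (E i)

lemma IsProjectionPartition.mul_sum_nsmul_mul (hE : IsProjectionPartition E) (n : ι → ℕ)
    (i : ι) : E i * (∑ j, n j • E j) * E i = n i • E i := by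
  rw [Finset.mul_sum, Finset.sum_mul, Finset.sum_eq_single i]
  · rw [mul_smul_comm, smul_mul_assoc, (hE.isStarProjection i).isIdempotentElem.eq,
      (hE.isStarProjection i).isIdempotentElem.eq]
  · intro j _ hji
    rw [mul_smul_comm, smul_mul_assoc, hE.mul_mul_eq_zero hji.symm, smul_zero]
  · simp

lemma IsProjectionPartition.sum_eq_sum_iff (hE : IsProjectionPartition E) (hne : ∀ i, E i ≠ 0)
    {s t : Finset ι} : ∑ i ∈ s, E i = ∑ i ∈ t, E i ↔ s = t := by
  refine ⟨fun h => ?_, fun h => h ▸ rfl⟩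
  have hcompress (u : Finset ι) (i : ι) :
      E i * (∑ j ∈ u, E j) * E i = if i ∈ u then E i else 0 := by
    have := hE.mul_sum_nsmul_mul (fun j => if j ∈ u then 1 else 0) i
    simpa [ite_smul, Finset.sum_ite_mem] using this
  ext i
  have hi := congrArg (fun x => E i * x * E i) h
  simp only [hcompress] at hi
  split_ifs at hi with hs ht ht
  · exact iff_of_true hs ht
  · exact absurd hi (hne i)
  · exact absurd hi.symm (hne i)
  · exact iff_of_false hs ht

end StarProjection

lemma eq_zero_of_mul_self_nsmul_le_nsmul {M : Type*} [AddCommGroup M] [PartialOrder M]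
    [IsOrderedAddMonoid M] {e : M} (he : 0 ≤ e) {n : ℕ} (hn : 2 ≤ n)
    (h : (n * n) • e ≤ n • e) : e = 0 := by
  have htwice : n • e + n • e ≤ n • e :=
    calc n • e + n • e = (n + n) • e := (add_nsmul ..).symm
      _ ≤ (n * n) • e := nsmul_le_nsmul_left he (by nlinarith)
      _ ≤ n • e := h
  have hle : e ≤ n • e := by
    simpa using nsmul_le_nsmul_left he (show 1 ≤ n by omega)
  exact le_antisymm (hle.trans (add_le_iff_nonpos_left.mp htwice)) he

namespace LGS

section Paths

variable {A : Type*} (G : LGS A)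

lemma path_nil_iff {l : ℕ} {x u : G.V l} : G.Path x [] u ↔ x = u := by
  constructor
  · intro h; cases h; rfl
  · rintro rfl; exact .nil x

lemma path_cons_iff {l m : ℕ} {x : G.V l} {a : A} {w : List A} {u : G.V m} :
    G.Path x (a :: w) u ↔ ∃ y : G.V (l + 1), G.edge l x a y ∧ G.Path y w u := by
  constructor
  · intro h; cases h with | cons e p => exact ⟨_, e, p⟩
  · rintro ⟨y, e, p⟩; exact .cons e p

variable {G} in
lemma LeftResolving.path_unique (hLR : G.LeftResolving) (w : List A) :
    ∀ {l m : ℕ} {x x' : G.V l} {u : G.V m}, G.Path x w u → G.Path x' w u → x = x' := by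
  induction w with
  | nil => intro l m x x' u hp hp'; cases hp; cases hp'; rfl
  | cons a w ih =>
    intro l m x x' u hp hp'
    obtain ⟨y, e, p⟩ := G.path_cons_iff.mp hp
    obtain ⟨y', e', p'⟩ := G.path_cons_iff.mp hp'
    obtain rfl := ih p p'
    exact hLR l x x' a y e e'

variable [∀ l, Fintype (G.V l)]

noncomputable def pathEnds (l m : ℕ) (w : List A) : Finset (G.V m) :=
  {u | ∃ v : G.V l, G.Path v w u}

variable {G} in
lemma LeftResolving.sum_sum_path {M : Type*} [AddCommMonoid M] (hLR : G.LeftResolving)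
    {l m : ℕ} (s : Finset (G.V l)) (w : List A) (f : G.V m → M) :
    ∑ x ∈ s, ∑ u with G.Path x w u, f u = ∑ u with ∃ x ∈ s, G.Path x w u, f u := by
  rw [← Finset.sum_biUnion]
  · congr 1
    ext u
    simp
  · intro x _ x' _ hxx'
    simp only [Function.onFun, Finset.disjoint_left, Finset.mem_filter, Finset.mem_univ,
      true_and]
    exact fun u hp hp' => hxx' (hLR.path_unique w hp hp')

end Paths

section Relations

variable {A R : Type*} [Ring R] [StarRing R] {G : LGS A} [∀ l, Fintype (G.V l)] {S : A → R}
  {E : ∀ l, G.V l → R}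

theorem leftResolving_of_relations [Fintype A] [PartialOrder R] [StarOrderedRing R]
    (hS : ∑ a, S a * star (S a) = 1)
    (hE : ∀ l, IsProjectionPartition (E l)) (hne : ∀ l v, E l v ≠ 0)
    (hSE : ∀ a l v,
      star (S a) * E l v * S a = ∑ u : G.V (l + 1), if G.edge l v a u then E (l + 1) u else 0) :
    G.LeftResolving := by
  intro l v v' a u hv hv'
  by_contra hvv'
  set N : G.V (l + 1) → ℕ := fun x => (Finset.univ.filter (G.edge l · a x)).card
  set P := star (S a) * S a
  have hP : P = ∑ x, N x • E (l + 1) x := by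
    calc P = ∑ w, star (S a) * E l w * S a := by
          rw [← Finset.sum_mul, ← Finset.mul_sum, (hE l).sum_eq_one, mul_one]
      _ = ∑ x, ∑ w, if G.edge l w a x then E (l + 1) x else 0 := by
          simp only [hSE]; exact Finset.sum_comm
      _ = ∑ x, N x • E (l + 1) x := by
          simp only [← Finset.sum_filter, Finset.sum_const, N]
  have hPP : P * P ≤ P := by
    have hSa : S a * star (S a) ≤ 1 :=
      hS ▸ Finset.single_le_sum (fun b _ => mul_star_self_nonneg (S b)) (Finset.mem_univ a)
    calc P * P = star (S a) * (S a * star (S a)) * S a := by simp only [P, mul_assoc]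
      _ ≤ star (S a) * 1 * S a := star_left_conjugate_le_conjugate hSa _
      _ = P := by rw [mul_one]
  have hEu := (hE (l + 1)).isStarProjection u
  have hEPE : E (l + 1) u * P * E (l + 1) u = N u • E (l + 1) u := by
    rw [hP]; exact (hE (l + 1)).mul_sum_nsmul_mul N u
  have hN : 2 ≤ N u := Finset.one_lt_card.mpr ⟨v, by simpa using hv, v', by simpa using hv', hvv'⟩
  refine hne _ u (eq_zero_of_mul_self_nsmul_le_nsmul hEu.nonneg hN ?_)
  calc (N u * N u) • E (l + 1) u
      = (E (l + 1) u * P * E (l + 1) u) * (E (l + 1) u * P * E (l + 1) u) := by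
        rw [hEPE, smul_mul_smul_comm, hEu.isIdempotentElem.eq]
    _ ≤ E (l + 1) u * (P * P) * E (l + 1) u :=
        hEu.mul_self_le_conjugate_mul_self (IsSelfAdjoint.star_mul_self _)
    _ ≤ E (l + 1) u * P * E (l + 1) u := hEu.conjugate_le_conjugate hPP
    _ = N u • E (l + 1) u := hEPE

lemma star_sword_mul_mul_sword (hLR : G.LeftResolving)
    (hSE : ∀ a l v,
      star (S a) * E l v * S a = ∑ u : G.V (l + 1), if G.edge l v a u then E (l + 1) u else 0)
    (w : List A) : ∀ {l m : ℕ} (x : G.V l), l + w.length = m →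
      star (sword S w) * E l x * sword S w = ∑ u : G.V m with G.Path x w u, E m u := by
  induction w with
  | nil =>
    rintro l m x rfl
    simp [sword, path_nil_iff, Finset.sum_filter]
  | cons a w ih =>
    intro l m x hm
    calc star (sword S (a :: w)) * E l x * sword S (a :: w)
        = star (sword S w) * (star (S a) * E l x * S a) * sword S w := by
          simp only [sword, List.map_cons, List.prod_cons, star_mul, mul_assoc]
      _ = ∑ y : G.V (l + 1) with G.edge l x a y, star (sword S w) * E (l + 1) y * sword S w := by
          rw [hSE, ← Finset.sum_filter, Finset.mul_sum, Finset.sum_mul]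
      _ = ∑ y : G.V (l + 1) with G.edge l x a y, ∑ u : G.V m with G.Path y w u, E m u :=
          Finset.sum_congr rfl fun y _ => ih y (by simp at hm; omega)
      _ = ∑ u : G.V m with G.Path x (a :: w) u, E m u := by
          rw [hLR.sum_sum_path]
          simp [path_cons_iff]

lemma star_sword_mul_sword (hLR : G.LeftResolving) {l m : ℕ} (hsum : ∑ v, E l v = 1)
    (hSE : ∀ a l v,
      star (S a) * E l v * S a = ∑ u : G.V (l + 1), if G.edge l v a u then E (l + 1) u else 0)
    (w : List A) (hm : l + w.length = m) :
    star (sword S w) * sword S w = ∑ u ∈ G.pathEnds l m w, E m u := by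
  calc star (sword S w) * sword S w = ∑ x, star (sword S w) * E l x * sword S w := by
        rw [← Finset.sum_mul, ← Finset.mul_sum, hsum, mul_one]
    _ = ∑ x, ∑ u : G.V m with G.Path x w u, E m u :=
        Finset.sum_congr rfl fun x _ => star_sword_mul_mul_sword hLR hSE w x hm
    _ = ∑ u ∈ G.pathEnds l m w, E m u := by
        rw [hLR.sum_sum_path]
        simp [pathEnds]

end Relations

namespace IsLambdaSyncSystem

variable {A : Type*} {G : LGS A} {Λ : ShiftLang A}

lemma append_mem_of_path (hsys : G.IsLambdaSyncSystem Λ) {l m : ℕ} {v : G.V l} {w : List A}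
    {u : G.V m} (hp : G.Path v w u) {μ : List A} (hμ : μ ∈ Λ.L)
    (hu : G.ΓminusV u = Λ.Γminus m μ) :
    w ++ μ ∈ Λ.L ∧ G.ΓminusV v = Λ.Γminus l (w ++ μ) := by
  induction hp with
  | nil v => exact ⟨hμ, hu⟩
  | cons e _ ih =>
    obtain ⟨hwμ, hy⟩ := ih hu
    obtain ⟨ν, -, haν, hyν, hvν⟩ := (hsys.2.2 _ _ _ _).mp e
    have hνwμ := hyν.symm.trans hy
    exact ⟨Λ.cons_mem_of_Γminus_eq hνwμ haν, hvν.trans (Λ.Γminus_cons_eq_of_Γminus_eq hνwμ _)⟩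

lemma exists_path_of_append_mem (hsys : G.IsLambdaSyncSystem Λ) {m : ℕ} {μ : List A}
    (hμ : μ ∈ Λ.Sync m) {u : G.V m} (hu : G.ΓminusV u = Λ.Γminus m μ) (w : List A) :
    ∀ {l : ℕ}, l + w.length = m → w ++ μ ∈ Λ.L →
      ∃ v : G.V l, G.Path v w u ∧ G.ΓminusV v = Λ.Γminus l (w ++ μ) := by
  induction w with
  | nil => rintro l rfl -; exact ⟨u, .nil u, hu⟩
  | cons a w ih =>
    intro l hl haw
    have hl' : l + 1 + w.length = m := by simp at hl; omega
    have hwμ : w ++ μ ∈ Λ.L := Λ.mem_of_append_mem_right (u := [a]) (by simpa using haw)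
    obtain ⟨y, py, hy⟩ := ih hl' hwμ
    have hwμ_sync : w ++ μ ∈ Λ.Sync (l + 1) := Λ.append_mem_Sync hμ w hl' hwμ
    have hawμ_sync : [a] ++ (w ++ μ) ∈ Λ.Sync l :=
      Λ.append_mem_Sync hwμ_sync [a] rfl (by simpa using haw)
    obtain ⟨v, hv⟩ := hsys.2.1 l _ hawμ_sync
    have e : G.edge l v a y := (hsys.2.2 l v a y).mpr ⟨w ++ μ, hwμ_sync, by simpa using haw, hy, hv⟩
    exact ⟨v, .cons e py, hv⟩

variable [∀ l, Fintype (G.V l)]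

lemma mem_pathEnds_iff (hsys : G.IsLambdaSyncSystem Λ) {l m : ℕ} {w μ : List A}
    (hμ : μ ∈ Λ.Sync m) {u : G.V m} (hu : G.ΓminusV u = Λ.Γminus m μ) (hl : l + w.length = m) :
    u ∈ G.pathEnds l m w ↔ w ++ μ ∈ Λ.L := by
  simp only [pathEnds, Finset.mem_filter, Finset.mem_univ, true_and]
  constructor
  · rintro ⟨v, hp⟩; exact (hsys.append_mem_of_path hp hμ.1 hu).1
  · intro hwμ
    obtain ⟨v, hp, -⟩ := hsys.exists_path_of_append_mem hμ hu w hl hwμ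
    exact ⟨v, hp⟩

lemma Γplus_subset_of_pathEnds_subset (hsys : G.IsLambdaSyncSystem Λ) (hΛ : Λ.IsLambdaSync)
    {l l' m : ℕ} {ξ η : List A} (hξ : l + ξ.length = m) (hη : l' + η.length = m)
    (h : G.pathEnds l m ξ ⊆ G.pathEnds l' m η) : Λ.Γplus ξ ⊆ Λ.Γplus η := by
  intro ω hξω
  obtain ⟨ν, hων, hξων⟩ := hΛ.exists_append_mem_Sync hξω l
  rw [Nat.add_comm, hξ] at hων
  obtain ⟨u, hu⟩ := hsys.2.1 m _ hων
  have hηων := (hsys.mem_pathEnds_iff hων hu hη).mp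
    (h ((hsys.mem_pathEnds_iff hων hu hξ).mpr hξων))
  exact Λ.mem_of_append_mem_left (v := ν) (by simpa using hηων)

lemma pathEnds_eq_iff (hsys : G.IsLambdaSyncSystem Λ) (hΛ : Λ.IsLambdaSync)
    {l l' m : ℕ} {ξ η : List A} (hξ : l + ξ.length = m) (hη : l' + η.length = m) :
    G.pathEnds l m ξ = G.pathEnds l' m η ↔ Λ.Γplus ξ = Λ.Γplus η := by
  constructor
  · intro h
    exact (hsys.Γplus_subset_of_pathEnds_subset hΛ hξ hη h.subset).antisymm
      (hsys.Γplus_subset_of_pathEnds_subset hΛ hη hξ h.symm.subset)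
  · intro h
    ext u
    obtain ⟨μ, hμ, hu⟩ := hsys.1 m u
    rw [hsys.mem_pathEnds_iff hμ hu hξ, hsys.mem_pathEnds_iff hμ hu hη]
    exact Set.ext_iff.mp h μ

end IsLambdaSyncSystem

end LGS

theorem followerSet_eq_iff_sourceProjection_eq_general
    {A : Type*} [Fintype A] {R : Type*} [Ring R] [StarRing R] [PartialOrder R]
    [StarOrderedRing R]
    (G : LGS A) [∀ l, Fintype (G.V l)] (Λ : ShiftLang A)
    (hlsΛ : Λ.IsLambdaSync) (hsys : G.IsLambdaSyncSystem Λ)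
    (S : A → R) (E : ∀ l : ℕ, G.V l → R)
    (h1 : ∑ a : A, S a * star (S a) = 1)
    (h2 : ∀ l : ℕ, ∑ v : G.V l, E l v = 1)
    (h5 : ∀ (a : A) (l : ℕ) (v : G.V l),
      star (S a) * E l v * S a = ∑ u : G.V (l + 1), if G.edge l v a u then E (l + 1) u else 0)
    (hEproj : ∀ (l : ℕ) (v : G.V l), E l v * E l v = E l v ∧ star (E l v) = E l v)
    (hEne : ∀ (l : ℕ) (v : G.V l), E l v ≠ 0)
    (ξ η : List A) :
    Λ.Γplus ξ = Λ.Γplus η ↔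
      star (sword S ξ) * sword S ξ = star (sword S η) * sword S η := by
  have hE (l : ℕ) : IsProjectionPartition (E l) :=
    ⟨fun v => isStarProjection_iff'.mpr (hEproj l v), h2 l⟩
  have hLR := LGS.leftResolving_of_relations h1 hE hEne h5
  rw [LGS.star_sword_mul_sword hLR (h2 η.length) h5 ξ (m := ξ.length + η.length) (by omega),
    LGS.star_sword_mul_sword hLR (h2 ξ.length) h5 η (m := ξ.length + η.length) (by omega),
    (hE _).sum_eq_sum_iff (hEne _), hsys.pathEnds_eq_iff hlsΛ (by omega) (by omega)]

/-- in the `C*`-algebra `O_{λ(Λ)}` of the `λ`-synchronizing `λ`-graph system of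
a `λ`-synchronizing subshift `Λ`, for words `ξ, η ∈ B_*(Λ)` one has
`Γ_*^+(ξ) = Γ_*^+(η)` iff `S_ξ* S_ξ = S_η* S_η`. -/
theorem followerSet_eq_iff_sourceProjection_eq
    {A : Type*} [Fintype A] {R : Type*} [Ring R] [StarRing R] [PartialOrder R]
    [StarOrderedRing R]
    (G : LGS A) [∀ l, Fintype (G.V l)] (Λ : ShiftLang A)
    (hirr : Λ.Irreducible) (hlsΛ : Λ.IsLambdaSync) (hsys : G.IsLambdaSyncSystem Λ)
    (S : A → R) (E : ∀ l : ℕ, G.V l → R)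
    (h1 : ∑ a : A, S a * star (S a) = 1)
    (h2 : ∀ l : ℕ, ∑ v : G.V l, E l v = 1)
    (h3 : ∀ (l : ℕ) (v : G.V l),
      E l v = ∑ u : G.V (l + 1), if G.ι l u = v then E (l + 1) u else 0)
    (h4 : ∀ (a : A) (l : ℕ) (v : G.V l),
      S a * star (S a) * E l v = E l v * (S a * star (S a)))
    (h5 : ∀ (a : A) (l : ℕ) (v : G.V l),
      star (S a) * E l v * S a = ∑ u : G.V (l + 1), if G.edge l v a u then E (l + 1) u else 0)
    (hEproj : ∀ (l : ℕ) (v : G.V l), E l v * E l v = E l v ∧ star (E l v) = E l v)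
    (hEne : ∀ (l : ℕ) (v : G.V l), E l v ≠ 0)
    (ξ η : List A) (hξ : ξ ∈ Λ.L) (hη : η ∈ Λ.L) :
    Λ.Γplus ξ = Λ.Γplus η ↔
      star (sword S ξ) * sword S ξ = star (sword S η) * sword S η :=
  followerSet_eq_iff_sourceProjection_eq_general G Λ hlsΛ hsys S E h1 h2 h5 hEproj hEne ξ η
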